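/- arXiv:1312.2924 — 2 statements merged into one kernel-verified Lean document; each statement's English description precedes it below -/
import Mathlib

section
/- Let n ≥ 1. For each m ≥ 1 and each i ∈ {1,…,m}, define the strand-deletion map d_i : Sym(m) → Sym(m−1) by letting d_i(σ) be the permutation of an (m−1)-element set obtained from σ by removing i from the domain and σ(i) from the codomain, relabeling order-preservingly. Then for all 1 ≤ i ≤ j ≤ n we have d_j ∘ d_i = d_i ∘ d_{j+1} as maps Sym(n+1) → Sym(n−1). -/
/-- Strand-deletion map `d_i : Sym(n+1) → Sym(n)`: remove `i` from the domain and
`σ i` from the codomain, relabeling order-preservingly. -/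
def strandDel {n : ℕ} (i : Fin (n + 1)) (σ : Equiv.Perm (Fin (n + 1))) :
    Equiv.Perm (Fin n) :=
  Equiv.removeNone ((finSuccEquiv' i).symm.trans (σ.trans (finSuccEquiv' (σ i))))

lemma strandDel_key {n : ℕ} (i : Fin (n + 1)) (σ : Equiv.Perm (Fin (n + 1))) (k : Fin n) :
    (σ i).succAbove (strandDel i σ k) = σ (i.succAbove k) := by
  have h : ((finSuccEquiv' i).symm.trans (σ.trans (finSuccEquiv' (σ i)))) (some k)
      = finSuccEquiv' (σ i) (σ (i.succAbove k)) := by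
    simp [Equiv.trans_apply, finSuccEquiv'_symm_some]
  have hne : σ (i.succAbove k) ≠ σ i := by
    intro hc
    exact Fin.succAbove_ne i k (σ.injective hc)
  obtain ⟨m, hm⟩ : ∃ m, σ (i.succAbove k) = (σ i).succAbove m := by
    rcases Fin.exists_succAbove_eq hne with ⟨m, hm⟩
    exact ⟨m, hm.symm⟩
  have hsome : ((finSuccEquiv' i).symm.trans (σ.trans (finSuccEquiv' (σ i)))) (some k)
      = some m := by
    rw [h, hm, finSuccEquiv'_succAbove]
  have := Equiv.removeNone_some _ ⟨m, hsome⟩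
  rw [hsome] at this
  have : strandDel i σ k = m := by
    simpa [strandDel] using this
  rw [this, hm]

lemma val_succAbove {n : ℕ} (p : Fin (n + 1)) (q : Fin n) :
    ((p.succAbove q : Fin (n + 1)) : ℕ) = if (q : ℕ) < (p : ℕ) then (q : ℕ) else (q : ℕ) + 1 := by
  rw [Fin.succAbove]
  split_ifs with h1 h2 h2 <;>
    simp_all [Fin.lt_def, Fin.castSucc, Fin.succ, Fin.castAdd, Fin.castLE]

lemma double_succAbove_eq {n : ℕ} (p p' : Fin (n + 2)) (q q' : Fin (n + 1))
    (h : p = p'.succAbove q') (h' : p' = p.succAbove q) (x : Fin n) :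
    p.succAbove (q.succAbove x) = p'.succAbove (q'.succAbove x) := by
  have hv : (p : ℕ) = if (q' : ℕ) < (p' : ℕ) then (q' : ℕ) else (q' : ℕ) + 1 := by
    rw [h, val_succAbove]
  have hv' : (p' : ℕ) = if (q : ℕ) < (p : ℕ) then (q : ℕ) else (q : ℕ) + 1 := by
    rw [h', val_succAbove]
  apply Fin.ext
  rw [val_succAbove, val_succAbove, val_succAbove, val_succAbove]
  split_ifs at hv hv' ⊢ <;> omega

/-- Simplicial face identity: `d_j ∘ d_i = d_i ∘ d_{j+1}` for `i ≤ j`. -/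
theorem strandDel_strandDel (n i j : ℕ) (hij : i ≤ j) (hj : j < n + 1)
    (σ : Equiv.Perm (Fin (n + 2))) :
    strandDel ⟨j, hj⟩ (strandDel ⟨i, by omega⟩ σ) =
      strandDel ⟨i, by omega⟩ (strandDel ⟨j + 1, by omega⟩ σ) := by
  set a : Fin (n + 2) := ⟨i, by omega⟩
  set c : Fin (n + 2) := ⟨j + 1, by omega⟩
  set b : Fin (n + 1) := ⟨j, hj⟩
  set a' : Fin (n + 1) := ⟨i, by omega⟩
  set τ := strandDel a σ
  set ρ := strandDel c σ
  ext k
  -- index identity: a.succAbove (b.succAbove k) = c.succAbove (a'.succAbove k)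
  have hidx : a.succAbove (b.succAbove k) = c.succAbove (a'.succAbove k) := by
    apply Fin.ext
    rw [val_succAbove, val_succAbove, val_succAbove, val_succAbove]
    simp only [a, b, c, a']
    split_ifs <;> omega
  have hc : a.succAbove b = c := by
    apply Fin.ext
    rw [val_succAbove]; simp only [a, b, c]; split_ifs <;> omega
  have ha : c.succAbove a' = a := by
    apply Fin.ext
    rw [val_succAbove]; simp only [a, a', c]; split_ifs <;> omega
  have h1 : (σ a).succAbove ((τ b).succAbove (strandDel b τ k)) = σ (a.succAbove (b.succAbove k)) := by
    rw [strandDel_key, strandDel_key]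
  have h2 : (σ c).succAbove ((ρ a').succAbove (strandDel a' ρ k)) = σ (c.succAbove (a'.succAbove k)) := by
    rw [strandDel_key, strandDel_key]
  have hτb : σ c = (σ a).succAbove (τ b) := by rw [strandDel_key, hc]
  have hρa : σ a = (σ c).succAbove (ρ a') := by rw [strandDel_key, ha]
  have hdouble := double_succAbove_eq (σ a) (σ c) (τ b) (ρ a') hρa hτb (strandDel b τ k)
  rw [hdouble, hidx, ← h2] at h1
  exact congrArg Fin.val (Fin.succAbove_right_injective (Fin.succAbove_right_injective h1))
end

section
/- The group Q with presentation ⟨u, ρ | ρuρ⁻¹ = u⁻¹, ρ² = u²⟩ has order 8 (it is isomorphic to the quaternion group Q₈). -/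
/-- Relations for `Q = ⟨u, ρ | ρuρ⁻¹ = u⁻¹, ρ² = u²⟩`, with `u` = generator `0`
and `ρ` = generator `1`. -/
def quatRels : Set (FreeGroup (Fin 2)) :=
  { FreeGroup.of 1 * FreeGroup.of 0 * (FreeGroup.of 1)⁻¹ * FreeGroup.of 0,
    (FreeGroup.of 1) ^ 2 * ((FreeGroup.of 0) ^ 2)⁻¹ }

namespace QuatAux

open QuaternionGroup

instance : NeZero (2 * 2 : ℕ) := ⟨by norm_num⟩

abbrev Q := PresentedGroup quatRels

def U : Q := PresentedGroup.of 0
def R : Q := PresentedGroup.of 1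

lemma rel1 : R * U * R⁻¹ * U = 1 := by
  have h : PresentedGroup.mk quatRels
      (FreeGroup.of 1 * FreeGroup.of 0 * (FreeGroup.of 1)⁻¹ * FreeGroup.of 0) = 1 :=
    (QuotientGroup.eq_one_iff _).mpr
      (Subgroup.subset_normalClosure (Set.mem_insert _ _))
  simpa [map_mul, map_inv, R, U, PresentedGroup.of] using h

lemma rel2 : R ^ 2 = U ^ 2 := by
  have h : PresentedGroup.mk quatRels
      ((FreeGroup.of 1) ^ 2 * (((FreeGroup.of 0) : FreeGroup (Fin 2)) ^ 2)⁻¹) = 1 :=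
    (QuotientGroup.eq_one_iff _).mpr
      (Subgroup.subset_normalClosure (Set.mem_insert_of_mem _ rfl))
  have h2 : R ^ 2 * (U ^ 2)⁻¹ = 1 := by
    simpa [map_mul, map_inv, map_pow, R, U, PresentedGroup.of] using h
  exact mul_inv_eq_one.mp h2

lemma hRU : SemiconjBy R U U⁻¹ := by
  have hc : R * U * R⁻¹ = U⁻¹ := mul_eq_one_iff_eq_inv.mp rel1
  exact mul_inv_eq_iff_eq_mul.mp hc

lemma key2 (m : ℕ) : R * U ^ m = (U ^ m)⁻¹ * R := by
  have h := hRU.pow_right m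
  rw [inv_pow] at h
  exact h

lemma key (m : ℕ) : U ^ m * R = R * (U ^ m)⁻¹ := by
  rw [eq_mul_inv_iff_mul_eq, mul_assoc, key2, ← mul_assoc, mul_inv_cancel, one_mul]

lemma hU4 : U ^ 4 = 1 := by
  have h1 : R * U ^ 2 = (U ^ 2)⁻¹ * R := key2 2
  have h2 : R * U ^ 2 = U ^ 2 * R := by
    rw [← rel2]
    group
  have h3 : U ^ 2 * R = (U ^ 2)⁻¹ * R := h2 ▸ h1
  have h4 : U ^ 2 = (U ^ 2)⁻¹ := mul_right_cancel h3
  calc U ^ 4 = U ^ 2 * U ^ 2 := by rw [← pow_add]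
    _ = (U ^ 2)⁻¹ * U ^ 2 := by rw [← h4]
    _ = 1 := inv_mul_cancel _

lemma hUmod (m n : ℕ) (h : m % 4 = n % 4) : U ^ m = U ^ n := by
  rw [pow_eq_pow_mod m hU4, pow_eq_pow_mod n hU4, h]

lemma hadd (i j : ZMod (2 * 2)) : U ^ (i + j).val = U ^ i.val * U ^ j.val := by
  rw [← pow_add]
  apply hUmod
  rw [ZMod.val_add]
  simp [Nat.mod_mod_of_dvd]

lemma hneg (i : ZMod (2 * 2)) : (U ^ i.val)⁻¹ = U ^ (-i).val := by
  symm
  apply eq_inv_of_mul_eq_one_left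
  rw [← hadd]
  simp

/-- Section of the canonical map to the quaternion group. -/
def ψ : QuaternionGroup 2 → Q
  | .a i => U ^ i.val
  | .xa i => R * U ^ i.val

lemma hmul (p q : QuaternionGroup 2) : ψ (p * q) = ψ p * ψ q := by
  rcases p with i | i <;> rcases q with j | j <;>
    simp only [a_mul_a, a_mul_xa, xa_mul_a, xa_mul_xa, ψ]
  · exact hadd i j
  · -- R * U ^ (j - i).val = U ^ i.val * (R * U ^ j.val)
    rw [← mul_assoc, key, mul_assoc, hneg, ← hadd, sub_eq_neg_add]
  · rw [hadd, mul_assoc]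
  · -- (R * U^i.val) * (R * U^j.val) = U ^ ((2:ZMod 4) + j - i).val
    have h1 : R * U ^ i.val * (R * U ^ j.val)
        = R ^ 2 * ((U ^ i.val)⁻¹ * U ^ j.val) := by
      calc R * U ^ i.val * (R * U ^ j.val) = R * (U ^ i.val * R) * U ^ j.val := by group
        _ = R * (R * (U ^ i.val)⁻¹) * U ^ j.val := by rw [key]
        _ = R ^ 2 * ((U ^ i.val)⁻¹ * U ^ j.val) := by rw [pow_two]; group
    have h2 : U ^ 2 = U ^ ((2 : ZMod (2*2)).val) := rfl
    have h3 : ((2:ℕ) : ZMod (2*2)) + j - i = 2 + (-i + j) := by push_cast; ring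
    rw [h3, h1, rel2, hneg, ← hadd, h2, ← hadd]

lemma ψ_one : ψ 1 = 1 := by
  show ψ (.a 0) = 1
  simp [ψ]

lemma ψ_inv (p : QuaternionGroup 2) : ψ p⁻¹ = (ψ p)⁻¹ := by
  apply eq_inv_of_mul_eq_one_left
  rw [← hmul, inv_mul_cancel, ψ_one]

lemma ψ_surj (g : Q) : ∃ q, ψ q = g := by
  let H : Subgroup Q :=
    { carrier := Set.range ψ
      one_mem' := ⟨1, ψ_one⟩
      mul_mem' := by rintro _ _ ⟨p, rfl⟩ ⟨q, rfl⟩; exact ⟨p * q, hmul p q⟩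
      inv_mem' := by rintro _ ⟨p, rfl⟩; exact ⟨p⁻¹, ψ_inv p⟩ }
  have hg : g ∈ H := by
    apply PresentedGroup.generated_by
    intro j
    fin_cases j
    · exact ⟨.a 1, by simp [ψ, ZMod.val_one]; rfl⟩
    · exact ⟨.xa 0, by simp [ψ]; rfl⟩
  exact hg

def F : Fin 2 → QuaternionGroup 2 := ![.a 1, .xa 0]

lemma hrels : ∀ r ∈ quatRels, FreeGroup.lift F r = 1 := by
  intro r hr
  rcases hr with rfl | rfl <;>
    · simp only [map_mul, map_inv, map_pow, FreeGroup.lift_apply_of, F]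
      decide

noncomputable def f : Q →* QuaternionGroup 2 := PresentedGroup.toGroup hrels

lemma f_ψ (q : QuaternionGroup 2) : f (ψ q) = q := by
  have hU : f U = .a 1 := PresentedGroup.toGroup.of hrels
  have hR : f R = .xa 0 := PresentedGroup.toGroup.of hrels
  rcases q with i | i <;> simp only [ψ, map_mul, map_pow, hU, hR, a_one_pow]
  · rw [ZMod.natCast_val, ZMod.cast_id]
  · rw [ZMod.natCast_val, ZMod.cast_id, xa_mul_a, zero_add]

lemma f_bij : Function.Bijective f := by
  constructor
  · intro g₁ g₂ h
    obtain ⟨q₁, rfl⟩ := ψ_surj g₁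
    obtain ⟨q₂, rfl⟩ := ψ_surj g₂
    rw [f_ψ, f_ψ] at h
    rw [h]
  · intro q
    exact ⟨ψ q, f_ψ q⟩

end QuatAux

/-- The group `⟨u, ρ | ρuρ⁻¹ = u⁻¹, ρ² = u²⟩` has order 8. -/
theorem quat_presented_card : Nat.card (PresentedGroup quatRels) = 8 := by
  rw [Nat.card_eq_of_bijective _ QuatAux.f_bij, Nat.card_eq_fintype_card,
    QuaternionGroup.card]
end
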